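/- Classical Plug-In Lemma: Let (y_1,...,y_t) be jointly distributed classical random variables and let s be a random variable over at most 2^ℓ values depending arbitrarily on them. Let j be uniform over [t], and let y' be drawn from the conditional distribution of y_j given (y_1,...,y_{j-1}) but independently of s given this prefix. Then the total variation distance between the distributions of (j, y_1,...,y_{j-1}, y_j, s) and (j, y_1,...,y_{j-1}, y', s) is at most sqrt(ℓ/(2t)). -/

import Mathlib

/-!
Write `m_k` for the joint law of `s` and the prefix `y_{<k}`, and `H_k = H(s ∣ y_{<k})` in nats.
Given `j`, the two tuples have laws `m_{j+1}(s, y_{≤j})` and `m_j(s, y_{<j}) · m(y_j ∣ y_{<j})`,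
and the Kullback–Leibler divergence between them is the conditional mutual information
`I(s : y_j ∣ y_{<j}) = H_j - H_{j+1}`. Summed over `j` these telescope to at most
`H_0 = H(s) ≤ log |S| ≤ ℓ log 2`. Pinsker's inequality `2 δ² ≤ KL` bounds the distance `δ_j`
of each slice, and since the distance of the full tuples is the mean of the `δ_j`, Jensen
gives `δ² ≤ mean δ_j² ≤ ℓ log 2 / (2t)`.

Pinsker itself comes from the pointwise bound `3(x - y)² / (2(x + 2y)) ≤ x log (x / y) - x + y`
and Cauchy–Schwarz with the weights `2(P + 2Q)/3`, which sum to `2`.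
-/

open Finset

namespace Stmt3

/-- Shannon entropy (in bits) of a probability mass function on a finite type. -/
noncomputable def H2 {α : Type*} [Fintype α] (p : α → ℝ) : ℝ :=
  -∑ a, p a * Real.logb 2 (p a)

variable {S Y : Type*} [Fintype S] [Fintype Y] [DecidableEq Y]

/-- Marginal distribution of `(s, y_1, …, y_j)` for a joint pmf on `s` and `(y_1,…,y_t)`. -/
noncomputable def margSPre {t : ℕ} (p : S × (Fin t → Y) → ℝ) (j : ℕ) (h : j ≤ t) :
    S × (Fin j → Y) → ℝ :=
  fun av => ∑ w : Fin t → Y,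
    if ∀ i : Fin j, w (Fin.castLE h i) = av.2 i then p (av.1, w) else 0

/-- Marginal distribution of the prefix `(y_1, …, y_j)`. -/
noncomputable def margPre {t : ℕ} (p : S × (Fin t → Y) → ℝ) (j : ℕ) (h : j ≤ t) :
    (Fin j → Y) → ℝ :=
  fun v => ∑ a : S, margSPre p j h (a, v)

/-- Marginal distribution of `s`. -/
noncomputable def margS {t : ℕ} (p : S × (Fin t → Y) → ℝ) : S → ℝ :=
  fun a => ∑ w, p (a, w)

/-- Total variation (statistical) distance between two mass functions. -/
noncomputable def tv {α : Type*} [Fintype α] (p q : α → ℝ) : ℝ :=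
  (∑ a, |p a - q a|) / 2

variable [DecidableEq S]

/-- The joint distribution of `(j, y_1,…,y_{j-1}, y_j, s)` where `j ← [t]` is uniform:
the "real" side of the Plug-In Lemma. -/
noncomputable def realDist {t : ℕ} (p : S × (Fin t → Y) → ℝ) :
    (Σ j : Fin t, (Fin (j.1 + 1) → Y) × S) → ℝ :=
  fun x => (1 / (t : ℝ)) * margSPre p (x.1.1 + 1) x.1.isLt (x.2.2, x.2.1)

/-- The joint distribution of `(j, y_1,…,y_{j-1}, y', s)` where `j ← [t]` is uniform and
`y'` is a fresh sample from the conditional law of `y_j` given the prefix `y_1,…,y_{j-1}`,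
conditionally independent of `s`: the "ideal" side of the Plug-In Lemma. -/
noncomputable def idealDist {t : ℕ} (p : S × (Fin t → Y) → ℝ) :
    (Σ j : Fin t, (Fin (j.1 + 1) → Y) × S) → ℝ :=
  fun x =>
    (1 / (t : ℝ)) *
      (margSPre p x.1.1 (Nat.le_of_succ_le x.1.isLt)
          (x.2.2, fun i => x.2.1 (Fin.castSucc i)) *
        (margPre p (x.1.1 + 1) x.1.isLt x.2.1 /
          margPre p x.1.1 (Nat.le_of_succ_le x.1.isLt) (fun i => x.2.1 (Fin.castSucc i))))

open Real InformationTheory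

lemma log_div_mul_div {a b c d : ℝ} (ha : a ≠ 0) (hb : b ≠ 0) (hc : c ≠ 0) (hd : d ≠ 0) :
    log (a / (b * (c / d))) = log (a / c) - log (b / d) := by
  rw [show a / (b * (c / d)) = a / c / (b / d) by ring,
    log_div (div_ne_zero ha hc) (div_ne_zero hb hd)]

lemma log_natCast_le_of_le_two_pow {n ℓ : ℕ} (h : n ≤ 2 ^ ℓ) : log n ≤ ℓ := by
  rcases n.eq_zero_or_pos with rfl | hn
  · simp
  calc log n ≤ log (2 ^ ℓ) := log_le_log (by exact_mod_cast hn) (by exact_mod_cast h)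
    _ = ℓ * log 2 := by rw [log_pow]
    _ ≤ ℓ := mul_le_of_le_one_right (Nat.cast_nonneg _) (log_two_lt_d9.le.trans (by norm_num))

lemma sum_eq_sum_sum_snoc {β : Type*} [Fintype β] {k : ℕ} (f : (Fin (k + 1) → β) → ℝ) :
    ∑ w, f w = ∑ v : Fin k → β, ∑ y, f (Fin.snoc v y) := by
  rw [← (Fin.snocEquiv fun _ => β).sum_comp, Fintype.sum_prod_type, sum_comm]
  rfl

lemma sum_fin_sub_succ {t : ℕ} (f : (k : ℕ) → k ≤ t → ℝ) :
    ∑ j : Fin t, (f j j.isLt.le - f (j + 1) j.isLt) = f 0 t.zero_le - f t le_rfl := by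
  let g : ℕ → ℝ := fun k => if h : k ≤ t then f k h else 0
  have hg : ∀ k (h : k ≤ t), g k = f k h := fun k h => dif_pos h
  simp only [← hg]
  exact (Fin.sum_univ_eq_sum_range (fun k => g k - g (k + 1)) t).trans (sum_range_sub' g t)

noncomputable def klGap (r : ℝ) : ℝ := klFun r - 3 * (r - 1) ^ 2 / (2 * (r + 2))

noncomputable def klGapDeriv (r : ℝ) : ℝ := log r - 3 * (r - 1) * (r + 5) / (2 * (r + 2) ^ 2)

lemma hasDerivAt_klGap {x : ℝ} (hx : 0 < x) : HasDerivAt klGap (klGapDeriv x) x := by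
  have hquot := ((((hasDerivAt_id' x).sub_const 1).fun_pow 2).const_mul 3).fun_div
    (((hasDerivAt_id' x).add_const 2).const_mul 2) (by positivity)
  refine ((hasDerivAt_klFun hx.ne').sub hquot).congr_deriv ?_
  rw [klGapDeriv]
  field_simp
  ring

lemma hasDerivAt_klGapDeriv {x : ℝ} (hx : 0 < x) :
    HasDerivAt klGapDeriv (1 / x - 27 / (x + 2) ^ 3) x := by
  have hquot := ((((hasDerivAt_id' x).sub_const 1).const_mul 3).fun_mul
    ((hasDerivAt_id' x).add_const 5)).fun_div
    ((((hasDerivAt_id' x).add_const 2).fun_pow 2).const_mul 2) (by positivity)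
  refine ((hasDerivAt_log hx.ne').sub hquot).congr_deriv ?_
  field_simp
  ring

lemma monotoneOn_klGapDeriv : MonotoneOn klGapDeriv (Set.Ioi 0) := by
  refine monotoneOn_of_deriv_nonneg (convex_Ioi 0)
    (fun x hx => (hasDerivAt_klGapDeriv hx).continuousAt.continuousWithinAt)
    (fun x hx =>
      (hasDerivAt_klGapDeriv (interior_subset hx)).differentiableAt.differentiableWithinAt)
    fun x hx => ?_
  have hx : 0 < x := by rwa [interior_Ioi] at hx
  rw [(hasDerivAt_klGapDeriv hx).deriv, sub_nonneg, div_le_div_iff₀ (by positivity) hx]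
  -- `(x + 2)³ - 27 x = (x - 1)² (x + 8)`
  nlinarith [mul_nonneg (sq_nonneg (x - 1)) (by linarith : (0 : ℝ) ≤ x + 8)]

lemma continuousOn_klGap : ContinuousOn klGap (Set.Ici 0) :=
  continuous_klFun.continuousOn.sub <| by
    refine ContinuousOn.div (by fun_prop) (by fun_prop) fun x hx => ?_
    have : (0 : ℝ) ≤ x := hx
    positivity

lemma klGap_nonneg {r : ℝ} (hr : 0 ≤ r) : 0 ≤ klGap r := by
  have hderiv_one : klGapDeriv 1 = 0 := by norm_num [klGapDeriv]
  have hone : klGap 1 = 0 := by norm_num [klGap, klFun_one]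
  rcases le_total r 1 with hr1 | hr1
  · refine hone ▸ antitoneOn_of_deriv_nonpos (convex_Icc 0 1)
      (continuousOn_klGap.mono Set.Icc_subset_Ici_self)
      (fun x hx => ?_) (fun x hx => ?_) ⟨hr, hr1⟩ ⟨zero_le_one, le_rfl⟩ hr1 <;>
      rw [interior_Icc] at hx
    · exact (hasDerivAt_klGap hx.1).differentiableAt.differentiableWithinAt
    · rw [(hasDerivAt_klGap hx.1).deriv, ← hderiv_one]
      exact monotoneOn_klGapDeriv hx.1 (Set.mem_Ioi.2 one_pos) hx.2.le
  · refine hone ▸ monotoneOn_of_deriv_nonneg (convex_Ici 1)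
      (continuousOn_klGap.mono (Set.Ici_subset_Ici.2 zero_le_one))
      (fun x hx => ?_) (fun x hx => ?_) Set.self_mem_Ici hr1 hr1 <;>
      rw [interior_Ici] at hx
    · exact (hasDerivAt_klGap (one_pos.trans hx)).differentiableAt.differentiableWithinAt
    · rw [(hasDerivAt_klGap (one_pos.trans hx)).deriv, ← hderiv_one]
      exact monotoneOn_klGapDeriv (Set.mem_Ioi.2 one_pos) (Set.mem_Ioi.2 (one_pos.trans hx)) hx.le

lemma sq_sub_div_le_mul_log_div {x y : ℝ} (hx : 0 ≤ x) (hy : 0 ≤ y) (hxy : y = 0 → x = 0) :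
    3 * (x - y) ^ 2 / (2 * (x + 2 * y)) ≤ x * log (x / y) - x + y := by
  rcases hy.eq_or_lt with rfl | hy
  · simp [hxy rfl]
  have hgap := mul_nonneg hy.le (klGap_nonneg (div_nonneg hx hy.le))
  rw [klGap, klFun_apply] at hgap
  have hlhs : 3 * (x - y) ^ 2 / (2 * (x + 2 * y))
      = y * (3 * (x / y - 1) ^ 2 / (2 * (x / y + 2))) := by
    field_simp
  have hrhs : x * log (x / y) - x + y = y * (x / y * log (x / y) + 1 - x / y) := by
    field_simp
    ring
  linarith

section Divergences

variable {α : Type*} [Fintype α]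

noncomputable def kl (P Q : α → ℝ) : ℝ := ∑ a, P a * log (P a / Q a)

theorem two_mul_tv_sq_le_kl {P Q : α → ℝ} (hP : ∀ a, 0 ≤ P a) (hQ : ∀ a, 0 ≤ Q a)
    (hPsum : ∑ a, P a = 1) (hQsum : ∑ a, Q a = 1) (hPQ : ∀ a, Q a = 0 → P a = 0) :
    2 * tv P Q ^ 2 ≤ kl P Q := by
  have hweight : ∑ a, 2 * (P a + 2 * Q a) / 3 = 2 := by
    rw [← sum_div, ← mul_sum, sum_add_distrib, ← mul_sum, hPsum, hQsum]
    norm_num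
  have hgap : ∑ a, 3 * (P a - Q a) ^ 2 / (2 * (P a + 2 * Q a)) ≤ kl P Q := by
    calc _ ≤ ∑ a, (P a * log (P a / Q a) - P a + Q a) :=
          sum_le_sum fun a _ => sq_sub_div_le_mul_log_div (hP a) (hQ a) (hPQ a)
      _ = kl P Q := by rw [sum_add_distrib, sum_sub_distrib, hPsum, hQsum, kl]; ring
  have hterm : ∀ a ∈ univ, |P a - Q a| ^ 2
      ≤ 2 * (P a + 2 * Q a) / 3 * (3 * (P a - Q a) ^ 2 / (2 * (P a + 2 * Q a))) := by
    intro a _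
    rcases (add_nonneg (hP a) (mul_nonneg zero_le_two (hQ a))).eq_or_lt with h0 | hpos
    · have hPa : P a = 0 := by linarith [hP a, hQ a]
      have hQa : Q a = 0 := by linarith [hP a, hQ a]
      simp [hPa, hQa]
    · rw [sq_abs]
      field_simp
      rw [mul_div_cancel_right₀ _ (by linarith)]
  have hcs : (∑ a, |P a - Q a|) ^ 2 ≤ 2 * kl P Q := by
    calc (∑ a, |P a - Q a|) ^ 2
        ≤ (∑ a, 2 * (P a + 2 * Q a) / 3) * ∑ a, 3 * (P a - Q a) ^ 2 / (2 * (P a + 2 * Q a)) :=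
          sum_sq_le_sum_mul_sum_of_sq_le_mul _ (fun a _ => by linarith [hP a, hQ a])
            (fun a _ => by have := hP a; have := hQ a; positivity) hterm
      _ ≤ 2 * kl P Q := by rw [hweight]; gcongr
  rw [tv, div_pow]
  linarith

lemma sum_negMulLog_le_log_card {q : α → ℝ} (hq : ∀ a, 0 ≤ q a) (hsum : ∑ a, q a = 1) :
    ∑ a, negMulLog (q a) ≤ log (Fintype.card α) := by
  have hcard : (0 : ℝ) < Fintype.card α := by
    have : Nonempty α := by
      by_contra h
      simp [not_nonempty_iff.1 h] at hsum
    exact_mod_cast Fintype.card_pos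
  have hjensen : ∑ a, (Fintype.card α : ℝ)⁻¹ * negMulLog (q a)
      ≤ negMulLog (∑ a, (Fintype.card α : ℝ)⁻¹ * q a) :=
    concaveOn_negMulLog.le_map_sum (fun _ _ => by positivity) (by simp [hcard.ne'])
      fun a _ => hq a
  rw [← mul_sum, ← mul_sum, hsum, mul_one, negMulLog, log_inv, neg_mul_neg,
    mul_le_mul_iff_of_pos_left (inv_pos.2 hcard)] at hjensen
  exact hjensen

end Divergences

section Prefixes

omit [DecidableEq S]

variable {t : ℕ} {p : S × (Fin t → Y) → ℝ}

section

omit [Fintype S]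

lemma margSPre_eq_sum_filter {k : ℕ} (h : k ≤ t) (s : S) (v : Fin k → Y) :
    margSPre p k h (s, v) = ∑ w with Fin.take k h w = v, p (s, w) := by
  simp only [margSPre, sum_filter, funext_iff, Fin.take_apply]

lemma margSPre_nonneg (hpos : ∀ x, 0 ≤ p x) {k : ℕ} (h : k ≤ t) (s : S) (v : Fin k → Y) :
    0 ≤ margSPre p k h (s, v) := by
  rw [margSPre_eq_sum_filter]
  exact sum_nonneg fun w _ => hpos _

lemma sum_margSPre_snoc {k : ℕ} (h : k + 1 ≤ t) (s : S) (v : Fin k → Y) :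
    ∑ y, margSPre p (k + 1) h (s, Fin.snoc v y) = margSPre p k (Nat.le_of_succ_le h) (s, v) := by
  simp only [margSPre_eq_sum_filter, Fin.take_succ_eq_snoc k h, Fin.snoc_inj, ← filter_filter]
  exact sum_fiberwise_of_maps_to (g := fun w : Fin t → Y => w ⟨k, h⟩) (fun _ _ => mem_univ _) _

lemma margSPre_succ_le (hpos : ∀ x, 0 ≤ p x) {k : ℕ} (h : k + 1 ≤ t) (s : S)
    (w : Fin (k + 1) → Y) :
    margSPre p (k + 1) h (s, w) ≤ margSPre p k (Nat.le_of_succ_le h) (s, Fin.init w) := by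
  rw [← sum_margSPre_snoc h s (Fin.init w)]
  conv_lhs => rw [← Fin.snoc_init_self w]
  exact single_le_sum (f := fun y => margSPre p (k + 1) h (s, Fin.snoc (Fin.init w) y))
    (fun y _ => margSPre_nonneg hpos h s _) (mem_univ _)

lemma margSPre_zero (s : S) (v : Fin 0 → Y) :
    margSPre p 0 t.zero_le (s, v) = margS p s := by
  rw [margSPre_eq_sum_filter, filter_true_of_mem fun w _ => Subsingleton.elim _ _]
  rfl

end

lemma margPre_nonneg (hpos : ∀ x, 0 ≤ p x) {k : ℕ} (h : k ≤ t) (v : Fin k → Y) :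
    0 ≤ margPre p k h v :=
  sum_nonneg fun s _ => margSPre_nonneg hpos h s v

lemma margSPre_le_margPre (hpos : ∀ x, 0 ≤ p x) {k : ℕ} (h : k ≤ t) (s : S) (v : Fin k → Y) :
    margSPre p k h (s, v) ≤ margPre p k h v :=
  single_le_sum (f := fun a => margSPre p k h (a, v)) (fun a _ => margSPre_nonneg hpos h a v)
    (mem_univ s)

lemma sum_margPre_snoc {k : ℕ} (h : k + 1 ≤ t) (v : Fin k → Y) :
    ∑ y, margPre p (k + 1) h (Fin.snoc v y) = margPre p k (Nat.le_of_succ_le h) v := by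
  simp only [margPre]
  rw [sum_comm]
  exact sum_congr rfl fun s _ => sum_margSPre_snoc h s v

lemma margPre_succ_le (hpos : ∀ x, 0 ≤ p x) {k : ℕ} (h : k + 1 ≤ t) (w : Fin (k + 1) → Y) :
    margPre p (k + 1) h w ≤ margPre p k (Nat.le_of_succ_le h) (Fin.init w) :=
  sum_le_sum fun s _ => margSPre_succ_le hpos h s w

lemma sum_margPre (hsum : ∑ x, p x = 1) {k : ℕ} (h : k ≤ t) :
    ∑ v, margPre p k h v = 1 := by
  simp only [margPre, margSPre_eq_sum_filter]
  rw [sum_comm, ← hsum, Fintype.sum_prod_type]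
  exact sum_congr rfl fun s _ => sum_fiberwise _ _ _

lemma margPre_zero (hsum : ∑ x, p x = 1) (v : Fin 0 → Y) : margPre p 0 t.zero_le v = 1 := by
  rw [← sum_margPre hsum t.zero_le, Fintype.sum_unique, Subsingleton.elim v default]

-- `H(s ∣ y_{<k})` in nats.
noncomputable def condEntropyPre (p : S × (Fin t → Y) → ℝ) (k : ℕ) (h : k ≤ t) : ℝ :=
  -∑ v, ∑ s, margSPre p k h (s, v) * log (margSPre p k h (s, v) / margPre p k h v)

lemma condEntropyPre_nonneg (hpos : ∀ x, 0 ≤ p x) {k : ℕ} (h : k ≤ t) :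
    0 ≤ condEntropyPre p k h := by
  refine neg_nonneg.2 <| sum_nonpos fun v _ => sum_nonpos fun s _ => ?_
  refine mul_nonpos_of_nonneg_of_nonpos (margSPre_nonneg hpos h s v) (log_nonpos ?_ ?_)
  · exact div_nonneg (margSPre_nonneg hpos h s v) (margPre_nonneg hpos h v)
  · exact div_le_one_of_le₀ (margSPre_le_margPre hpos h s v) (margPre_nonneg hpos h v)

lemma condEntropyPre_zero (hsum : ∑ x, p x = 1) :
    condEntropyPre p 0 t.zero_le = ∑ s, negMulLog (margS p s) := by
  simp [condEntropyPre, margSPre_zero, margPre_zero hsum, negMulLog]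

-- The laws of `(y_{≤j}, s)` in the two tuples given the index `j`, i.e. `t` times the `j`-th
-- fibres of `realDist p` and `idealDist p`.
noncomputable def realSlice (p : S × (Fin t → Y) → ℝ) (j : Fin t) :
    (Fin (j + 1) → Y) × S → ℝ :=
  fun x => margSPre p (j + 1) j.isLt (x.2, x.1)

noncomputable def idealSlice (p : S × (Fin t → Y) → ℝ) (j : Fin t) :
    (Fin (j + 1) → Y) × S → ℝ :=
  fun x => margSPre p j j.isLt.le (x.2, Fin.init x.1) *
    (margPre p (j + 1) j.isLt x.1 / margPre p j j.isLt.le (Fin.init x.1))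

lemma idealSlice_nonneg (hpos : ∀ x, 0 ≤ p x) (j : Fin t) (x : (Fin (j + 1) → Y) × S) :
    0 ≤ idealSlice p j x :=
  mul_nonneg (margSPre_nonneg hpos _ _ _)
    (div_nonneg (margPre_nonneg hpos _ _) (margPre_nonneg hpos _ _))

lemma sum_realSlice (hsum : ∑ x, p x = 1) (j : Fin t) : ∑ x, realSlice p j x = 1 := by
  rw [Fintype.sum_prod_type]
  exact sum_margPre hsum j.isLt

lemma sum_idealSlice (hpos : ∀ x, 0 ≤ p x) (hsum : ∑ x, p x = 1) (j : Fin t) :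
    ∑ x, idealSlice p j x = 1 := by
  rw [Fintype.sum_prod_type, ← sum_margPre hsum j.isLt]
  refine sum_congr rfl fun w _ => ?_
  simp only [idealSlice, ← sum_mul]
  refine mul_div_cancel_of_imp' fun h0 => le_antisymm ?_ (margPre_nonneg hpos _ w)
  exact h0 ▸ margPre_succ_le hpos j.isLt w

lemma realSlice_eq_zero_of_idealSlice_eq_zero (hpos : ∀ x, 0 ≤ p x) {j : Fin t}
    {x : (Fin (j + 1) → Y) × S} (hx : idealSlice p j x = 0) : realSlice p j x = 0 := by
  refine le_antisymm ?_ (margSPre_nonneg hpos _ _ _)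
  have hle_pre := margSPre_le_margPre hpos j.isLt x.2 x.1
  rcases mul_eq_zero.1 hx with h0 | h0
  · exact h0 ▸ margSPre_succ_le hpos j.isLt x.2 x.1
  rcases div_eq_zero_iff.1 h0 with h0 | h0
  · exact h0 ▸ hle_pre
  · exact h0 ▸ hle_pre.trans (margPre_succ_le hpos j.isLt x.1)

lemma kl_realSlice_idealSlice (hpos : ∀ x, 0 ≤ p x) (j : Fin t) :
    kl (realSlice p j) (idealSlice p j)
      = condEntropyPre p j j.isLt.le - condEntropyPre p (j + 1) j.isLt := by
  have hterm : ∀ w s, realSlice p j (w, s) * log (realSlice p j (w, s) / idealSlice p j (w, s))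
      = margSPre p (j + 1) j.isLt (s, w) *
          log (margSPre p (j + 1) j.isLt (s, w) / margPre p (j + 1) j.isLt w)
        - margSPre p (j + 1) j.isLt (s, w) *
          log (margSPre p j j.isLt.le (s, Fin.init w) / margPre p j j.isLt.le (Fin.init w)) := by
    intro w s
    rcases (margSPre_nonneg hpos j.isLt s w).eq_or_lt with h0 | hP
    · simp [realSlice, ← h0]
    have hA := hP.trans_le (margSPre_succ_le hpos j.isLt s w)
    have hB := hP.trans_le (margSPre_le_margPre hpos j.isLt s w)
    have hC := hB.trans_le (margPre_succ_le hpos j.isLt w)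
    rw [realSlice, idealSlice, log_div_mul_div hP.ne' hA.ne' hB.ne' hC.ne', mul_sub]
  have hprefix : ∑ w, ∑ s, margSPre p (j + 1) j.isLt (s, w) *
      log (margSPre p j j.isLt.le (s, Fin.init w) / margPre p j j.isLt.le (Fin.init w))
      = -condEntropyPre p j j.isLt.le := by
    rw [condEntropyPre, neg_neg, sum_eq_sum_sum_snoc]
    refine sum_congr rfl fun v _ => ?_
    simp only [Fin.init_snoc]
    rw [sum_comm]
    exact sum_congr rfl fun s _ => by rw [← sum_mul, sum_margSPre_snoc]
  simp only [kl, Fintype.sum_prod_type, hterm, sum_sub_distrib, hprefix, condEntropyPre]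
  ring

lemma sum_kl_realSlice_idealSlice_le (hpos : ∀ x, 0 ≤ p x) (hsum : ∑ x, p x = 1) :
    ∑ j, kl (realSlice p j) (idealSlice p j) ≤ log (Fintype.card S) := by
  simp only [kl_realSlice_idealSlice hpos]
  rw [sum_fin_sub_succ (condEntropyPre p), condEntropyPre_zero hsum]
  have hmargS : ∑ s, margS p s = 1 := by rw [← hsum, Fintype.sum_prod_type]; rfl
  linarith [condEntropyPre_nonneg hpos (le_refl t),
    sum_negMulLog_le_log_card (q := margS p) (fun s => sum_nonneg fun w _ => hpos (s, w)) hmargS]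

lemma two_mul_tv_sq_le_kl_slice (hpos : ∀ x, 0 ≤ p x) (hsum : ∑ x, p x = 1) (j : Fin t) :
    2 * tv (realSlice p j) (idealSlice p j) ^ 2 ≤ kl (realSlice p j) (idealSlice p j) :=
  two_mul_tv_sq_le_kl (fun x => margSPre_nonneg hpos _ x.2 x.1) (idealSlice_nonneg hpos j)
    (sum_realSlice hsum j) (sum_idealSlice hpos hsum j)
    fun _ => realSlice_eq_zero_of_idealSlice_eq_zero hpos

lemma tv_realDist_idealDist (p : S × (Fin t → Y) → ℝ) :
    tv (realDist p) (idealDist p) = (∑ j, tv (realSlice p j) (idealSlice p j)) / t := by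
  simp only [tv, Fintype.sum_sigma, sum_div]
  refine sum_congr rfl fun j _ => sum_congr rfl fun x _ => ?_
  change |1 / (t : ℝ) * realSlice p j x - 1 / (t : ℝ) * idealSlice p j x| / 2
    = |realSlice p j x - idealSlice p j x| / 2 / t
  rw [← mul_sub, abs_mul, abs_of_nonneg (by positivity)]
  ring

theorem tv_realDist_idealDist_le (hpos : ∀ x, 0 ≤ p x) (hsum : ∑ x, p x = 1) :
    tv (realDist p) (idealDist p) ≤ √(log (Fintype.card S) / (2 * t)) := by
  refine le_sqrt_of_sq_le ?_
  calc tv (realDist p) (idealDist p) ^ 2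
      = ((∑ j, tv (realSlice p j) (idealSlice p j)) / #(univ : Finset (Fin t))) ^ 2 := by
        rw [tv_realDist_idealDist, card_univ, Fintype.card_fin]
    _ ≤ (∑ j, tv (realSlice p j) (idealSlice p j) ^ 2) / t := by
        simpa using sum_div_card_sq_le_sum_sq_div_card (s := univ)
          (f := fun j => tv (realSlice p j) (idealSlice p j))
    _ ≤ (∑ j, kl (realSlice p j) (idealSlice p j) / 2) / t := by
        gcongr with j
        linarith [two_mul_tv_sq_le_kl_slice hpos hsum j]
    _ ≤ log (Fintype.card S) / (2 * t) := by
        rw [← sum_div, div_div]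
        gcongr
        exact sum_kl_realSlice_idealSlice_le hpos hsum

end Prefixes

theorem plug_in_lemma_general {t ℓ : ℕ} (p : S × (Fin t → Y) → ℝ)
    (hpos : ∀ x, 0 ≤ p x) (hsum : ∑ x, p x = 1)
    (hcard : Fintype.card S ≤ 2 ^ ℓ) :
    tv (realDist p) (idealDist p) ≤ Real.sqrt ((ℓ : ℝ) / (2 * t)) := by
  refine (tv_realDist_idealDist_le hpos hsum).trans (sqrt_le_sqrt ?_)
  gcongr
  exact log_natCast_le_of_le_two_pow hcard

/-- **Classical Plug-In Lemma**: for jointly distributed classical variables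
`y_1,…,y_t` and a variable `s` over at most `2^ℓ` values depending arbitrarily on them,
and a uniform index `j ← [t]`, the statistical distance between
`(j, y_1,…,y_{j-1}, y_j, s)` and `(j, y_1,…,y_{j-1}, y', s)` is at most `√(ℓ/(2t))`,
where `y'` is a fresh sample from the conditional law of `y_j` given the prefix,
independent of `s` given the prefix. -/
theorem plug_in_lemma {t ℓ : ℕ} (p : S × (Fin t → Y) → ℝ)
    (hpos : ∀ x, 0 ≤ p x) (hsum : ∑ x, p x = 1)
    (hcard : Fintype.card S ≤ 2 ^ ℓ) (ht : 0 < t) :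
    tv (realDist p) (idealDist p) ≤ Real.sqrt ((ℓ : ℝ) / (2 * t)) :=
  plug_in_lemma_general p hpos hsum hcard

end Stmt3
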